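/- A Morse function f on an n-dimensional Riemannian manifold X that is strictly mean curvature convex (i.e. mn.curv_x(f) > 0 at every non-critical point x) has all its critical points of Morse index at most n − 2. Equivalently: at a nondegenerate critical point of f, the Hessian of f cannot be negative definite on any (n−1)-dimensional subspace if nearby level sets have positive mean curvature toward the downstream gradient direction; concretely, prove the linear-algebra core: if a nondegenerate critical point had index ≥ n−1, then small level hypersurfaces near it would have nonpositive mean curvature with respect to the downstream normal, contradicting strict mean curvature convexity. -/

import Mathlib

/-- Mean curvature of level hypersurfaces of `f` (divergence of the normalized
gradient; convex boundaries get positive mean curvature, and the coorientation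
is by the downstream gradient `-∇f/‖∇f‖`). -/
noncomputable def meanCurv {F : Type*} [NormedAddCommGroup F] [InnerProductSpace ℝ F]
    [FiniteDimensional ℝ F] (f : F → ℝ) (x : F) : ℝ :=
  ∑ i, inner ℝ (fderiv ℝ (fun y => ‖gradient f y‖⁻¹ • gradient f y) x (stdOrthonormalBasis ℝ F i)) (stdOrthonormalBasis ℝ F i)

/-!
Since `meanCurv f = div (∇f / ‖∇f‖) = ‖∇f‖⁻¹ (tr D∇f - ⟪N, D∇f N⟫)` with `N = ∇f / ‖∇f‖`,
positive mean curvature gives `⟪N, D∇f N⟫ ≤ tr D∇f` wherever `∇f ≠ 0`. Approaching the critical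
point `x₀` along an eigenvector of the Hessian `H = D∇f x₀` with eigenvalue `μ ≠ 0`, the unit
normal `N` tends to a unit eigenvector for `μ`, so in the limit `μ ≤ tr H`. Applied to the largest
eigenvalue (nonzero by nondegeneracy), this leaves the other eigenvalues a nonnegative sum, so at
least two eigenvalues are nonnegative: the Morse index is at most `n - 2`. A subspace of dimension
`n - 1` therefore meets the span of the eigenvectors with nonnegative eigenvalues.
-/

open scoped RealInnerProductSpace
open Filter Topology

variable {E : Type*} [NormedAddCommGroup E] [InnerProductSpace ℝ E]

theorem HasFDerivAt.inv_norm {G : Type*} [NormedAddCommGroup G] [NormedSpace ℝ G]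
    {g : G → E} {B : G →L[ℝ] E} {x : G} (hg : HasFDerivAt g B x) (hx : g x ≠ 0) :
    HasFDerivAt (fun y => ‖g y‖⁻¹) (-(‖g x‖ ^ 3)⁻¹ • (innerSL ℝ (g x)).comp B) x := by
  have hnorm : ‖g x‖ ≠ 0 := norm_ne_zero_iff.mpr hx
  have hsqrt := hg.norm_sq.sqrt (pow_ne_zero 2 hnorm)
  simp only [Real.sqrt_sq (norm_nonneg _)] at hsqrt
  refine ((hasDerivAt_inv hnorm).comp_hasFDerivAt x hsqrt).congr_fderiv ?_
  ext v
  simp only [one_div, mul_inv_rev, neg_smul, neg_apply, smul_apply,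
    ContinuousLinearMap.comp_apply, coe_innerSL_apply, nsmul_eq_mul, Nat.cast_ofNat, smul_eq_mul,
    neg_inj]
  field_simp

theorem trace_fderiv_inv_norm_smul_self [FiniteDimensional ℝ E] {g : E → E} {x : E}
    (hg : DifferentiableAt ℝ g x) (hx : g x ≠ 0) :
    LinearMap.trace ℝ E (fderiv ℝ (fun y => ‖g y‖⁻¹ • g y) x) =
      ‖g x‖⁻¹ * (LinearMap.trace ℝ E (fderiv ℝ g x) -
        ⟪‖g x‖⁻¹ • g x, fderiv ℝ g x (‖g x‖⁻¹ • g x)⟫) := by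
  have hnorm : ‖g x‖ ≠ 0 := norm_ne_zero_iff.mpr hx
  rw [((hg.hasFDerivAt.inv_norm hx).fun_smul hg.hasFDerivAt).fderiv]
  simp only [neg_smul, ContinuousLinearMap.toLinearMap_add, ContinuousLinearMap.toLinearMap_smul,
    ContinuousLinearMap.coe_smulRight, ContinuousLinearMap.toLinearMap_neg,
    ContinuousLinearMap.toLinearMap_comp, ContinuousLinearMap.toLinearMap_innerSL_apply, map_add,
    map_smul, smul_eq_mul, LinearMap.trace_smulRight, LinearMap.neg_apply, LinearMap.smul_apply,
    LinearMap.coe_comp, coe_innerₛₗ_apply, ContinuousLinearMap.coe_coe, Function.comp_apply,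
    real_inner_smul_right, real_inner_smul_left]
  field_simp
  ring

theorem tendsto_inv_norm_smul_of_hasFDerivAt {F : Type*} [NormedAddCommGroup F]
    [NormedSpace ℝ F] {g : F → E} {B : F →L[ℝ] E} {x₀ : F} (hg : HasFDerivAt g B x₀)
    (hx₀ : g x₀ = 0) {e : F} (he : B e ≠ 0) :
    Tendsto (fun c : ℝ => ‖g (x₀ + c⁻¹ • e)‖⁻¹ • g (x₀ + c⁻¹ • e)) atTop
      (𝓝 (‖B e‖⁻¹ • B e)) := by
  have hslope : Tendsto (fun c : ℝ => c • g (x₀ + c⁻¹ • e)) atTop (𝓝 (B e)) := by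
    simpa [hx₀] using hg.lim_real e
  have hcont : ContinuousAt (fun v : E => ‖v‖⁻¹ • v) (B e) :=
    (continuous_norm.continuousAt.inv₀ (norm_ne_zero_iff.mpr he)).smul continuousAt_id
  refine (hcont.tendsto.comp hslope).congr' ?_
  filter_upwards [(hslope.eventually_ne he), eventually_gt_atTop 0] with c hc hc0
  have hg0 : g (x₀ + c⁻¹ • e) ≠ 0 := fun h => hc (by simp [h])
  exact (SameRay.sameRay_pos_smul_left _ hc0).inv_norm_smul_eq hc hg0

theorem le_trace_of_hasEigenvector [FiniteDimensional ℝ E] {g : E → E} (hg : ContDiff ℝ 1 g)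
    {x₀ : E} (hx₀ : g x₀ = 0)
    (hdiv : ∀ x, g x ≠ 0 → 0 ≤ LinearMap.trace ℝ E (fderiv ℝ (fun y => ‖g y‖⁻¹ • g y) x))
    {μ : ℝ} {e : E} (he : Module.End.HasEigenvector (fderiv ℝ g x₀ : E →ₗ[ℝ] E) μ e)
    (hμ : μ ≠ 0) :
    μ ≤ LinearMap.trace ℝ E (fderiv ℝ g x₀) := by
  set A := fderiv ℝ g x₀
  have hAe : A e = μ • e := he.apply_eq_smul
  have hAe0 : A e ≠ 0 := hAe ▸ smul_ne_zero hμ he.2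
  set u := ‖A e‖⁻¹ • A e
  have hu : ‖u‖ = 1 := norm_smul_inv_norm hAe0
  have hu0 : u ≠ 0 := norm_ne_zero_iff.mp (by rw [hu]; exact one_ne_zero)
  have hAu : A u = μ • u := by simp only [u, map_smul, hAe, smul_comm μ]
  set Φ : E × E → ℝ := fun p => LinearMap.trace ℝ E (fderiv ℝ g p.1) - ⟪p.2, fderiv ℝ g p.1 p.2⟫
  have hΦ : Continuous Φ := by
    have hDg : Continuous (fderiv ℝ g) := hg.continuous_fderiv one_ne_zero
    have htr : Continuous fun T : E →L[ℝ] E => LinearMap.trace ℝ E T :=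
      (LinearMap.trace ℝ E ∘ₗ ContinuousLinearMap.coeLM ℝ).continuous_of_finiteDimensional
    exact (htr.comp (hDg.comp continuous_fst)).sub
      (continuous_snd.inner ((hDg.comp continuous_fst).clm_apply continuous_snd))
  set γ : ℝ → E := fun c => x₀ + c⁻¹ • e
  have hγ : Tendsto γ atTop (𝓝 x₀) := by
    simpa [γ] using ((tendsto_inv_atTop_zero (𝕜 := ℝ)).smul_const e).const_add x₀
  have hN : Tendsto (fun c => ‖g (γ c)‖⁻¹ • g (γ c)) atTop (𝓝 u) :=
    tendsto_inv_norm_smul_of_hasFDerivAt (hg.differentiable one_ne_zero x₀).hasFDerivAt hx₀ hAe0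
  have hΦγ : ∀ᶠ c in atTop, 0 ≤ Φ (γ c, ‖g (γ c)‖⁻¹ • g (γ c)) := by
    filter_upwards [hN.eventually_ne hu0] with c hc
    have hgc : g (γ c) ≠ 0 := fun h => hc (by simp [h])
    have := hdiv (γ c) hgc
    rw [trace_fderiv_inv_norm_smul_self (hg.differentiable one_ne_zero _) hgc] at this
    exact (mul_nonneg_iff_of_pos_left (inv_pos.mpr (norm_pos_iff.mpr hgc))).mp this
  have hlim : 0 ≤ Φ (x₀, u) := ge_of_tendsto ((hΦ.tendsto _).comp (hγ.prodMk_nhds hN)) hΦγ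
  have hΦu : Φ (x₀, u) = LinearMap.trace ℝ E A - μ := by
    change LinearMap.trace ℝ E A - ⟪u, A u⟫ = _
    rw [hAu, real_inner_smul_right, real_inner_self_eq_norm_sq, hu, one_pow, mul_one]
  linarith

theorem meanCurv_eq_trace [FiniteDimensional ℝ E] (f : E → ℝ) (x : E) :
    meanCurv f x =
      LinearMap.trace ℝ E (fderiv ℝ (fun y => ‖gradient f y‖⁻¹ • gradient f y) x) := by
  rw [meanCurv, LinearMap.trace_eq_sum_inner _ (stdOrthonormalBasis ℝ E)]
  simp [real_inner_comm]

theorem ContDiff.gradient [CompleteSpace E] {f : E → ℝ} {n : WithTop ℕ∞}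
    (hf : ContDiff ℝ (n + 1) f) : ContDiff ℝ n (gradient f) :=
  (InnerProductSpace.toDual ℝ E).symm.contDiff.comp (hf.fderiv_right le_rfl)

theorem inner_fderiv_gradient_apply [CompleteSpace E] (f : E → ℝ) (x v w : E) :
    ⟪fderiv ℝ (gradient f) x v, w⟫ = fderiv ℝ (fderiv ℝ f) x v w := by
  rw [show gradient f = (InnerProductSpace.toDual ℝ E).symm ∘ fderiv ℝ f from rfl,
    LinearIsometryEquiv.comp_fderiv]
  exact InnerProductSpace.toDual_symm_apply

theorem iteratedFDeriv_two_apply_eq_inner [CompleteSpace E] (f : E → ℝ) (x v w : E) :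
    iteratedFDeriv ℝ 2 f x ![v, w] = ⟪fderiv ℝ (gradient f) x v, w⟫ := by
  rw [iteratedFDeriv_two_apply, inner_fderiv_gradient_apply]
  simp

theorem ContDiffAt.isSymmetric_fderiv_gradient [CompleteSpace E] {f : E → ℝ} {x : E}
    (hf : ContDiffAt ℝ 2 f x) : (fderiv ℝ (gradient f) x : E →ₗ[ℝ] E).IsSymmetric := by
  intro v w
  rw [ContinuousLinearMap.coe_coe, inner_fderiv_gradient_apply, real_inner_comm,
    inner_fderiv_gradient_apply]
  exact hf.isSymmSndFDerivAt (by simp) v w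

theorem Orthonormal.inner_map_self_nonneg_of_mem_span {ι : Type*} [Fintype ι] {v : ι → E}
    (hv : Orthonormal ℝ v) {T : E →ₗ[ℝ] E} {μ : ι → ℝ} (hTv : ∀ i, T (v i) = μ i • v i)
    (hμ : ∀ i, 0 ≤ μ i) {x : E} (hx : x ∈ Submodule.span ℝ (Set.range v)) :
    0 ≤ ⟪T x, x⟫ := by
  obtain ⟨c, rfl⟩ := (Submodule.mem_span_range_iff_exists_fun ℝ).mp hx
  have hT : T (∑ i, c i • v i) = ∑ i, (μ i * c i) • v i := by
    simp [map_sum, map_smul, hTv, smul_smul, mul_comm]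
  rw [hT, hv.inner_sum]
  exact Finset.sum_nonneg fun i _ => by
    simpa [mul_assoc] using mul_nonneg (hμ i) (mul_self_nonneg (c i))

open Finset in
theorem LinearMap.IsSymmetric.exists_mem_ne_zero_inner_nonneg [FiniteDimensional ℝ E]
    {T : E →ₗ[ℝ] E} (hT : T.IsSymmetric) {n : ℕ} (hn : Module.finrank ℝ E = n)
    {W : Submodule ℝ E} (hW : n < Module.finrank ℝ W + #{i | 0 ≤ hT.eigenvalues hn i}) :
    ∃ v ∈ W, v ≠ 0 ∧ 0 ≤ ⟪T v, v⟫ := by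
  set s : Finset (Fin n) := {i | 0 ≤ hT.eigenvalues hn i}
  set b := hT.eigenvectorBasis hn
  have hb : Orthonormal ℝ fun i : s => b i := b.orthonormal.comp _ Subtype.val_injective
  set P := Submodule.span ℝ (Set.range fun i : s => b i)
  have hP : Module.finrank ℝ P = #s := by
    rw [finrank_span_eq_card hb.linearIndependent, Fintype.card_coe]
  have hWP : ¬ Disjoint W P := fun h => by
    have := Submodule.finrank_add_finrank_le_of_disjoint h
    omega
  obtain ⟨v, hvW, hvP, hv0⟩ : ∃ v ∈ W, v ∈ P ∧ v ≠ 0 := by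
    simpa [Submodule.disjoint_def] using hWP
  exact ⟨v, hvW, hv0, hb.inner_map_self_nonneg_of_mem_span (μ := fun i => hT.eigenvalues hn i)
    (fun i => by simp [b]) (fun i => (mem_filter.mp i.2).2) hvP⟩

open Finset in
theorem LinearMap.IsSymmetric.two_le_card_nonneg_eigenvalues [FiniteDimensional ℝ E]
    {T : E →ₗ[ℝ] E} (hT : T.IsSymmetric) {n : ℕ} (hn : Module.finrank ℝ E = n) (h2 : 2 ≤ n)
    (hT_inj : Function.Injective T)
    (htr : ∀ μ e, Module.End.HasEigenvector T μ e → μ ≠ 0 → μ ≤ LinearMap.trace ℝ E T) :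
    2 ≤ #{i | 0 ≤ hT.eigenvalues hn i} := by
  set μ := hT.eigenvalues hn
  have : Nonempty (Fin n) := ⟨⟨0, by omega⟩⟩
  obtain ⟨i₀, -, hmax⟩ := exists_max_image univ μ univ_nonempty
  have hμ₀ : μ i₀ ≠ 0 := by
    intro h
    have he := hT.hasEigenvector_eigenvectorBasis hn i₀
    refine he.2 (hT_inj ?_)
    simp [he.apply_eq_smul, show hT.eigenvalues hn i₀ = 0 from h]
  have hrest : 0 ≤ ∑ j ∈ univ.erase i₀, μ j := by
    have := htr _ _ (hT.hasEigenvector_eigenvectorBasis hn i₀) hμ₀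
    rw [hT.trace_eq_sum_eigenvalues hn, ← add_sum_erase _ _ (mem_univ i₀)] at this
    simpa using this
  obtain ⟨j, hj, hμj⟩ : ∃ j ∈ univ.erase i₀, 0 ≤ μ j := by
    by_contra! h
    have hne : (univ.erase i₀).Nonempty := by
      rw [← card_pos, card_erase_of_mem (mem_univ _), card_univ, Fintype.card_fin]
      omega
    exact (sum_neg h hne).not_ge hrest
  have hij : j ≠ i₀ := ne_of_mem_erase hj
  calc 2 = #{j, i₀} := (card_pair hij).symm
    _ ≤ #{i | 0 ≤ μ i} := card_le_card fun i hi => by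
      rcases mem_insert.mp hi with rfl | hi
      · simpa using hμj
      · rw [mem_singleton.mp hi]; simpa using hμj.trans (hmax j (mem_univ j))

theorem stmt5_general {n : ℕ} (hn : 2 ≤ n) (f : EuclideanSpace ℝ (Fin n) → ℝ)
    (hf : ContDiff ℝ 2 f)
    (ε : EuclideanSpace ℝ (Fin n) → ℝ) (hεpos : ∀ x, 0 < ε x)
    (hmc : ∀ x, gradient f x ≠ 0 → ε x ≤ meanCurv f x)
    (x₀ : EuclideanSpace ℝ (Fin n)) (hcrit : gradient f x₀ = 0)
    (hnd : ∀ v : EuclideanSpace ℝ (Fin n),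
      (∀ w, iteratedFDeriv ℝ 2 f x₀ ![v, w] = 0) → v = 0) :
    ∀ W : Submodule ℝ (EuclideanSpace ℝ (Fin n)), n - 1 ≤ Module.finrank ℝ W →
      ∃ v ∈ W, v ≠ 0 ∧ 0 ≤ iteratedFDeriv ℝ 2 f x₀ ![v, v] := by
  intro W hW
  have hH := hf.contDiffAt.isSymmetric_fderiv_gradient (x := x₀)
  have hH_inj : Function.Injective (fderiv ℝ (gradient f) x₀) :=
    (injective_iff_map_eq_zero _).mpr fun v hv => hnd v fun w => by
      rw [iteratedFDeriv_two_apply_eq_inner, hv, inner_zero_left]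
  have hindex := hH.two_le_card_nonneg_eigenvalues finrank_euclideanSpace_fin hn hH_inj
    fun μ e he hμ => le_trace_of_hasEigenvector (hf.gradient (n := 1)) hcrit
      (fun x hx => meanCurv_eq_trace f x ▸ (hεpos x).le.trans (hmc x hx)) he hμ
  obtain ⟨v, hvW, hv0, hv⟩ :=
    hH.exists_mem_ne_zero_inner_nonneg finrank_euclideanSpace_fin (W := W) (by omega)
  exact ⟨v, hvW, hv0, by rwa [iteratedFDeriv_two_apply_eq_inner]⟩

/-- linear-algebra core of "strictly mean curvature convex Morse
functions have all Morse indices ≤ n-2": if `f` is `C²`, strictly mean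
curvature convex (mean curvature of level sets ≥ ε > 0 at all non-critical
points) and `x₀` is a nondegenerate critical point, then the Hessian of `f` at
`x₀` is not negative definite on any subspace of dimension ≥ n-1, i.e. every
such subspace contains a nonzero vector on which the Hessian is ≥ 0. -/
theorem stmt5 {n : ℕ} (hn : 2 ≤ n) (f : EuclideanSpace ℝ (Fin n) → ℝ)
    (hf : ContDiff ℝ 2 f)
    (ε : EuclideanSpace ℝ (Fin n) → ℝ) (hε : Continuous ε) (hεpos : ∀ x, 0 < ε x)
    (hmc : ∀ x, gradient f x ≠ 0 → ε x ≤ meanCurv f x)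
    (x₀ : EuclideanSpace ℝ (Fin n)) (hcrit : gradient f x₀ = 0)
    (hnd : ∀ v : EuclideanSpace ℝ (Fin n),
      (∀ w, iteratedFDeriv ℝ 2 f x₀ ![v, w] = 0) → v = 0) :
    ∀ W : Submodule ℝ (EuclideanSpace ℝ (Fin n)), n - 1 ≤ Module.finrank ℝ W →
      ∃ v ∈ W, v ≠ 0 ∧ 0 ≤ iteratedFDeriv ℝ 2 f x₀ ![v, v] :=
  stmt5_general hn f hf ε hεpos hmc x₀ hcrit hnd
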